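/- Let V be a contiguous vtree over ordered variables X_1,…,X_n of depth d, and let G = V_{v→Z_v} be the associated tree with latents at internal vertices. For each interval [a,b] (1 ≤ a ≤ b ≤ n) let C_{a:b} be the set of ⊆-maximal nodes v of V whose covered interval is contained in {X_a,…,X_b}. Then: (i) the covered intervals of the elements of C_{a:b} partition {X_a,…,X_b}; (ii) if a ≤ c ≤ e ≤ b, then every element of C_{c:e} has an ancestor-or-self in C_{a:b}; (iii) |C_{a:b}| ≤ 4d. Consequently, for any contiguous vtree W over X_1,…,X_n, assigning C_w := C_{a:b} to the node w of W with covered interval {X_a,…,X_b} (replacing any leaf-variable elements by their parents in G) yields a valid labelling of W with respect to G of cardinality at most 12d. -/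

import Mathlib

open scoped BigOperators

/-! ### Probabilistic circuits

A probabilistic circuit is a rooted DAG of leaf, sum and product nodes.  We represent the
DAG by a finite sequence of nodes; well-formedness (`PC.WF`) requires that the children of
every node have strictly smaller index, and the root is the node of largest index. -/

inductive PCNode (ι : Type) (Val : ι → Type) (N : ℕ) where
  | leaf (v : ι) (f : Val v → ℝ)
  | sum (ch : List (Fin N × ℝ))
  | prod (ch : List (Fin N))

namespace PCNode

variable {ι : Type} {Val : ι → Type} {N : ℕ}

def children : PCNode ι Val N → List (Fin N)
  | .leaf _ _ => []
  | .sum ch => ch.map Prod.fst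
  | .prod ch => ch

def childCount : PCNode ι Val N → ℕ
  | .leaf _ _ => 0
  | .sum ch => ch.length
  | .prod ch => ch.length

def isProdB : PCNode ι Val N → Bool
  | .prod _ => true
  | _ => false

end PCNode

structure PC (ι : Type) (Val : ι → Type) where
  numNodes : ℕ
  node : Fin numNodes → PCNode ι Val numNodes

namespace PC

variable {ι : Type} {Val : ι → Type}

/-- Acyclicity: every edge goes from a larger to a strictly smaller index. -/
def WF (C : PC ι Val) : Prop :=
  ∀ i : Fin C.numNodes, ∀ j ∈ (C.node i).children, (j : ℕ) < (i : ℕ)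

/-- Fuelled evaluation of a node; for a well-formed circuit, fuel `C.numNodes` always
suffices. -/
def evalFuel (C : PC ι Val) (x : ∀ i, Val i) : ℕ → Fin C.numNodes → ℝ
  | 0, _ => 0
  | k+1, i =>
    match C.node i with
    | .leaf v f => f (x v)
    | .sum ch => (ch.map fun p => p.2 * evalFuel C x k p.1).sum
    | .prod ch => (ch.map fun j => evalFuel C x k j).prod

def nodeEval (C : PC ι Val) (x : ∀ i, Val i) (i : Fin C.numNodes) : ℝ :=
  evalFuel C x C.numNodes i

/-- The function computed by the circuit (the value of its root node). -/
def eval (C : PC ι Val) (x : ∀ i, Val i) : ℝ :=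
  if h : 0 < C.numNodes then nodeEval C x ⟨C.numNodes - 1, by omega⟩ else 0

def scopeFuel [DecidableEq ι] (C : PC ι Val) : ℕ → Fin C.numNodes → Finset ι
  | 0, _ => ∅
  | k+1, i =>
    match C.node i with
    | .leaf v _ => {v}
    | .sum ch => (ch.map fun p => scopeFuel C k p.1).foldr (· ∪ ·) ∅
    | .prod ch => (ch.map fun j => scopeFuel C k j).foldr (· ∪ ·) ∅

/-- The scope of a node: the set of variables its subcircuit depends on. -/
def scope [DecidableEq ι] (C : PC ι Val) (i : Fin C.numNodes) : Finset ι :=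
  scopeFuel C C.numNodes i

def rootScope [DecidableEq ι] (C : PC ι Val) : Finset ι :=
  if h : 0 < C.numNodes then scope C ⟨C.numNodes - 1, by omega⟩ else ∅

/-- The size of a circuit: its number of edges. -/
def numEdges (C : PC ι Val) : ℕ :=
  ∑ i : Fin C.numNodes, (C.node i).childCount

def depthFuel (C : PC ι Val) : ℕ → Fin C.numNodes → ℕ
  | 0, _ => 0
  | k+1, i =>
    match C.node i with
    | .leaf _ _ => 0
    | .sum ch => (ch.map fun p => depthFuel C k p.1 + 1).foldr max 0
    | .prod ch => (ch.map fun j => depthFuel C k j + 1).foldr max 0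

/-- The depth of a circuit: the length of the longest root-to-leaf path. -/
def depth (C : PC ι Val) : ℕ :=
  if h : 0 < C.numNodes then depthFuel C C.numNodes ⟨C.numNodes - 1, by omega⟩ else 0

/-- All children of any sum node have the same scope. -/
def Smooth [DecidableEq ι] (C : PC ι Val) : Prop :=
  ∀ (i : Fin C.numNodes) (ch : List (Fin C.numNodes × ℝ)), C.node i = .sum ch →
    ∀ p ∈ ch, ∀ q ∈ ch, scope C p.1 = scope C q.1

/-- The children of any product node have pairwise disjoint scopes. -/
def Decomposable [DecidableEq ι] (C : PC ι Val) : Prop :=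
  ∀ (i : Fin C.numNodes) (ch : List (Fin C.numNodes)), C.node i = .prod ch →
    ch.Pairwise fun a b => Disjoint (scope C a) (scope C b)

/-- Sum-node weights and leaf functions are nonnegative. -/
def NonnegWeights (C : PC ι Val) : Prop :=
  (∀ (i : Fin C.numNodes) (ch : List (Fin C.numNodes × ℝ)), C.node i = .sum ch →
      ∀ p ∈ ch, 0 ≤ p.2) ∧
  (∀ (i : Fin C.numNodes) (v : ι) (f : Val v → ℝ), C.node i = .leaf v f → ∀ a, 0 ≤ f a)

/-- The weights of every sum node sum to one. -/
def NormalizedSums (C : PC ι Val) : Prop :=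
  ∀ (i : Fin C.numNodes) (ch : List (Fin C.numNodes × ℝ)), C.node i = .sum ch →
    (ch.map Prod.snd).sum = 1

/-- Every leaf computes a probability distribution over its variable. -/
def NormalizedLeaves [∀ i, Fintype (Val i)] (C : PC ι Val) : Prop :=
  ∀ (i : Fin C.numNodes) (v : ι) (f : Val v → ℝ), C.node i = .leaf v f → ∑ a, f a = 1

/-- Sum/leaf and product nodes alternate: children of sums are products and children of
products are sums or leaves. -/
def Alternating (C : PC ι Val) : Prop :=
  (∀ (i : Fin C.numNodes) (ch : List (Fin C.numNodes × ℝ)), C.node i = .sum ch →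
      ∀ p ∈ ch, (C.node p.1).isProdB = true) ∧
  (∀ (i : Fin C.numNodes) (ch : List (Fin C.numNodes)), C.node i = .prod ch →
      ∀ j ∈ ch, (C.node j).isProdB = false)

/-- For every input, at most one child of each sum node evaluates to a nonzero value. -/
def Deterministic (C : PC ι Val) : Prop :=
  ∀ (x : ∀ i, Val i) (i : Fin C.numNodes) (ch : List (Fin C.numNodes × ℝ)),
    C.node i = .sum ch → ∀ p ∈ ch, ∀ q ∈ ch,
      nodeEval C x p.1 ≠ 0 → nodeEval C x q.1 ≠ 0 → p.1 = q.1

/-- The number of product nodes with a given scope. -/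
def prodCount [DecidableEq ι] (C : PC ι Val) (S : Finset ι) : ℕ :=
  (Finset.univ.filter fun i : Fin C.numNodes =>
    (C.node i).isProdB = true ∧ scope C i = S).card

/-- The index of a product node within the product nodes sharing its scope. -/
def idxOf [DecidableEq ι] (C : PC ι Val) (i : Fin C.numNodes) : ℕ :=
  (Finset.univ.filter fun j : Fin C.numNodes =>
    (j : ℕ) < (i : ℕ) ∧ (C.node j).isProdB = true ∧ scope C j = scope C i).card

/-- Bundle of basic "probabilistic circuit over all the variables" conditions:
well-formed DAG, nonnegative normalized weights, normalized leaves, alternation of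
sum/leaf and product nodes, and the root depending on all variables. -/
def IsPCOver [DecidableEq ι] [Fintype ι] [∀ i, Fintype (Val i)] (C : PC ι Val) : Prop :=
  C.WF ∧ C.NonnegWeights ∧ C.NormalizedSums ∧ C.NormalizedLeaves ∧ C.Alternating ∧
    C.rootScope = Finset.univ

end PC

/-! ### Vtrees -/

inductive Vtree (ι : Type) where
  | leaf (x : ι)
  | node (l r : Vtree ι)
deriving DecidableEq

namespace Vtree

variable {ι : Type}

def varsFinset [DecidableEq ι] : Vtree ι → Finset ι
  | .leaf x => {x}
  | .node l r => varsFinset l ∪ varsFinset r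

def leavesList : Vtree ι → List ι
  | .leaf x => [x]
  | .node l r => leavesList l ++ leavesList r

/-- A vtree over a set `S` of variables: its leaves are in bijection with `S`. -/
def ValidOver (T : Vtree ι) (S : Set ι) : Prop :=
  T.leavesList.Nodup ∧ ∀ x : ι, x ∈ T.leavesList ↔ x ∈ S

def numNodesV : Vtree ι → ℕ
  | .leaf _ => 1
  | .node l r => numNodesV l + numNodesV r + 1

def IsChildOf (c p : Vtree ι) : Prop :=
  match p with
  | .leaf _ => False
  | .node l r => c = l ∨ c = r

inductive IsSubtreeOf : Vtree ι → Vtree ι → Prop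
  | refl (t : Vtree ι) : IsSubtreeOf t t
  | left {s l r : Vtree ι} : IsSubtreeOf s l → IsSubtreeOf s (.node l r)
  | right {s l r : Vtree ι} : IsSubtreeOf s r → IsSubtreeOf s (.node l r)

def subtreesList : Vtree ι → List (Vtree ι)
  | .leaf x => [.leaf x]
  | .node l r => .node l r :: (subtreesList l ++ subtreesList r)

def isNodeB : Vtree ι → Bool
  | .leaf _ => false
  | .node _ _ => true

/-- The inner (non-leaf) nodes of a vtree. -/
def innerFinset [DecidableEq ι] (V : Vtree ι) : Finset (Vtree ι) :=
  (V.subtreesList.filter fun t => t.isNodeB).toFinset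

def depthV : Vtree ι → ℕ
  | .leaf _ => 0
  | .node l r => max (depthV l) (depthV r) + 1

/-- The nodes of a vtree occurring at a given depth. -/
def atDepth : Vtree ι → ℕ → Set (Vtree ι)
  | t, 0 => {t}
  | .leaf _, _+1 => ∅
  | .node l r, k+1 => atDepth l k ∪ atDepth r k

theorem numNodesV_lt_of_isChildOf {c p : Vtree ι} (h : c.IsChildOf p) :
    c.numNodesV < p.numNodesV := by
  cases p with
  | leaf x => exact h.elim
  | node l r =>
    rcases h with h | h <;> subst h <;> simp only [numNodesV] <;> omega

end Vtree

/-- The tree `V_{v → Z_v}`, viewed as a graph: vertices are the subtrees of `V`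
(inner subtrees play the role of the latent variables `Z_v`, leaves the role of the
variables `X`), with edges between each node and its children. -/
def vtreeGraph {ι : Type} (V : Vtree ι) : SimpleGraph (Vtree ι) where
  Adj s t := (s.IsChildOf t ∨ t.IsChildOf s) ∧ s.IsSubtreeOf V ∧ t.IsSubtreeOf V
  symm := by
    constructor
    rintro s t ⟨h, hs, ht⟩
    exact ⟨h.symm, ht, hs⟩
  loopless := by
    constructor
    rintro s ⟨h, -, -⟩
    rcases h with h | h <;>
      exact absurd (Vtree.numNodesV_lt_of_isChildOf h) (lt_irrefl _)

namespace PC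

variable {ι : Type} {Val : ι → Type}

/-- Structured decomposability with respect to a vtree: every product node has exactly
two children, whose scopes are the variables of the two children of an inner node of the
vtree. -/
def StructuredBy [DecidableEq ι] (C : PC ι Val) (V : Vtree ι) : Prop :=
  ∀ (i : Fin C.numNodes) (ch : List (Fin C.numNodes)), C.node i = .prod ch →
    ∃ (c₁ c₂ : Fin C.numNodes) (l r : Vtree ι), ch = [c₁, c₂] ∧
      (Vtree.node l r).IsSubtreeOf V ∧
      scope C c₁ = l.varsFinset ∧ scope C c₂ = r.varsFinset

/-- Generalized structured decomposability (for products with arbitrarily many children):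
every product node decomposes the variables of some vtree node into the variables of a
family of its subtrees. -/
def StructuredByGen [DecidableEq ι] (C : PC ι Val) (V : Vtree ι) : Prop :=
  ∀ (i : Fin C.numNodes) (ch : List (Fin C.numNodes)), C.node i = .prod ch →
    ∃ u : Vtree ι, u.IsSubtreeOf V ∧
      (∀ j ∈ ch, ∃ s : Vtree ι, s.IsSubtreeOf u ∧ scope C j = s.varsFinset) ∧
      (ch.map fun j => scope C j).foldr (· ∪ ·) ∅ = u.varsFinset

/-- The hidden state size: the maximum number of product nodes sharing the scope of an
inner vtree node. -/
def hiddenStateSize [DecidableEq ι] (C : PC ι Val) (V : Vtree ι) : ℕ :=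
  V.innerFinset.sup fun t => prodCount C t.varsFinset

end PC

/-! ### Contiguity and linear vtrees (for variables `Fin n`) -/

def IsIntervalFin {n : ℕ} (S : Finset (Fin n)) : Prop :=
  ∃ a b : ℕ, ∀ i : Fin n, i ∈ S ↔ (a ≤ (i : ℕ) ∧ (i : ℕ) ≤ b)

def PC.ContiguousPC {n : ℕ} {Val : Fin n → Type} (C : PC (Fin n) Val) : Prop :=
  ∀ i : Fin C.numNodes, IsIntervalFin (PC.scope C i)

def Vtree.ContiguousV {n : ℕ} (V : Vtree (Fin n)) : Prop :=
  ∀ t : Vtree (Fin n), t.IsSubtreeOf V → IsIntervalFin t.varsFinset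

inductive Vtree.IsLinearFrom {n : ℕ} : ℕ → Vtree (Fin n) → Prop
  | single (a : ℕ) (ha : a < n) (h : a + 1 = n) : IsLinearFrom a (.leaf ⟨a, ha⟩)
  | cons (a : ℕ) (ha : a < n) (T : Vtree (Fin n)) (h : a + 1 < n) :
      IsLinearFrom (a+1) T → IsLinearFrom a (.node (.leaf ⟨a, ha⟩) T)

/-- The (right-)linear vtree, splitting `{Xᵢ}` from `{Xᵢ₊₁, …, Xₙ}` at each level. -/
def Vtree.IsLinear {n : ℕ} (V : Vtree (Fin n)) : Prop := Vtree.IsLinearFrom 0 V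

/-! ### Blocking, covers and vtree labellings -/

/-- `C` blocks all paths between `A` and `B` in the graph `G`. -/
def SimpleGraph.BlocksSets {α : Type} (G : SimpleGraph α) (C A B : Set α) : Prop :=
  ∀ ⦃a b : α⦄, a ∈ A → b ∈ B → ∀ p : G.Walk a b, ∃ c ∈ C, c ∈ p.support

/-- A valid labelling of a target vtree `W` with respect to a (tree-shaped) graph `G`,
where the variable `i` is represented by the vertex `xv i` and `X` is the set of all
variables.  The root is labelled `∅`, each leaf is labelled by the parent (i.e. the
neighbours) of its variable, the label of every inner node covers its variables, and the
labels of the children block their variables from the other labels. -/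
structure IsValidLabelling {α ι : Type} [DecidableEq ι] (G : SimpleGraph α) (xv : ι → α)
    (X : Set ι) (W : Vtree ι) (label : Vtree ι → Set α) : Prop where
  root_empty : label W = ∅
  leaf_parent : ∀ x : ι, (Vtree.leaf x).IsSubtreeOf W →
    label (.leaf x) = {p | G.Adj (xv x) p}
  covers : ∀ l r : Vtree ι, (Vtree.node l r).IsSubtreeOf W →
    G.BlocksSets (label (.node l r))
      (xv '' ((Vtree.node l r).varsFinset : Set ι))
      (xv '' (X \ ((Vtree.node l r).varsFinset : Set ι)))
  blocks_left : ∀ l r : Vtree ι, (Vtree.node l r).IsSubtreeOf W →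
    G.BlocksSets (label l) (xv '' (l.varsFinset : Set ι)) (label r ∪ label (.node l r))
  blocks_right : ∀ l r : Vtree ι, (Vtree.node l r).IsSubtreeOf W →
    G.BlocksSets (label r) (xv '' (r.varsFinset : Set ι)) (label l ∪ label (.node l r))

/-! ### The augmented circuit -/

/-- Value types for the augmented circuit: the original variables keep their values, and
each latent variable `Z_v` (indexed by the vtree node `v`) takes natural number values. -/
@[reducible] def augVal {ι : Type} (Val : ι → Type) : ι ⊕ Vtree ι → Type
  | .inl i => Val i
  | .inr _ => ℕ

/-- Find the subtree of a vtree with the given variable set (if any). -/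
def Vtree.findByVars {ι : Type} [DecidableEq ι] : Vtree ι → Finset ι → Option (Vtree ι)
  | .leaf x, S => if S = {x} then some (.leaf x) else none
  | .node l r, S =>
      if S = (Vtree.node l r).varsFinset then some (.node l r)
      else (findByVars l S).orElse fun _ => findByVars r S

/-- The augmented circuit `A_aug` of a structured circuit: each product node `t` with
scope `X_v` gets an additional leaf child over the latent variable `Z_v`, computing the
indicator function `1[Z_v = idx(t)]`.  (Node `2*i+1` is a copy of node `i` of the original
circuit and node `2*i` is the extra indicator leaf attached to it when `i` is a product.) -/
def PC.augment {ι : Type} {Val : ι → Type} [DecidableEq ι] (C : PC ι Val) (V : Vtree ι) :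
    PC (ι ⊕ Vtree ι) (augVal Val) where
  numNodes := 2 * C.numNodes
  node := fun k =>
    if hk : (k : ℕ) % 2 = 1 then
      match C.node ⟨(k : ℕ) / 2, by have := k.isLt; omega⟩ with
      | .leaf v f => .leaf (Sum.inl v) f
      | .sum ch => .sum (ch.map fun p =>
          ((⟨2 * (p.1 : ℕ) + 1, by have := p.1.isLt; omega⟩ : Fin (2 * C.numNodes)), p.2))
      | .prod ch => .prod ((ch.map fun (j : Fin C.numNodes) =>
          (⟨2 * (j : ℕ) + 1, by have := j.isLt; omega⟩ : Fin (2 * C.numNodes))) ++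
          [⟨2 * ((k : ℕ) / 2), by have := k.isLt; omega⟩])
    else
      match C.node ⟨(k : ℕ) / 2, by have := k.isLt; omega⟩ with
      | .prod _ => .leaf
          (Sum.inr ((V.findByVars (PC.scope C ⟨(k : ℕ) / 2, by have := k.isLt; omega⟩)).getD V))
          (fun m => if m = PC.idxOf C ⟨(k : ℕ) / 2, by have := k.isLt; omega⟩ then 1 else 0)
      | _ => .leaf (Sum.inr V) (fun _ => 1)

/-- Combine an assignment of the observed variables with an assignment of the latent
variables into an assignment for the augmented circuit. -/
def augAssign {ι : Type} {Val : ι → Type} [DecidableEq ι] (V : Vtree ι) (x : ∀ i, Val i)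
    (z : ∀ t ∈ V.innerFinset, ℕ) : ∀ s : ι ⊕ Vtree ι, augVal Val s :=
  fun s => match s with
  | .inl i => x i
  | .inr t => if ht : t ∈ V.innerFinset then z t ht else 0

/-- The vtree of the augmented circuit: a new leaf for `Z_v` is attached at each inner
node `v`. -/
def Vtree.augTree {ι : Type} : Vtree ι → Vtree (ι ⊕ Vtree ι)
  | .leaf x => .leaf (.inl x)
  | .node l r => .node (.leaf (.inr (.node l r))) (.node (augTree l) (augTree r))

/-- `maxCover V S`: the set of ⊆-maximal nodes of the vtree `V` whose covered variables
are contained in `S`. -/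
def maxCover {ι : Type} [DecidableEq ι] (V : Vtree ι) (S : Set ι) : Set (Vtree ι) :=
  {t : Vtree ι | t.IsSubtreeOf V ∧ (t.varsFinset : Set ι) ⊆ S ∧
    ∀ u : Vtree ι, u.IsSubtreeOf V → (u.varsFinset : Set ι) ⊆ S → t.IsSubtreeOf u → u = t}

/-- The interval `{i : Fin n | a ≤ i ≤ b}` of variables. -/
def finInterval (n : ℕ) (a b : ℕ) : Set (Fin n) := {i : Fin n | a ≤ (i : ℕ) ∧ (i : ℕ) ≤ b}

/-- Replace a leaf node of `V` by its parent in `V` (i.e. by its set of neighbours in the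
tree `V_{v→Z_v}`); inner nodes are kept. -/
def replLeaf {ι : Type} [DecidableEq ι] (V : Vtree ι) : Vtree ι → Set (Vtree ι)
  | .leaf x => {p | (vtreeGraph V).Adj (.leaf x) p}
  | t => {t}

/-- The labelling of a target vtree `W` induced by maximal covers in `V`: the node `w`
(other than the root, which gets `∅` by the convention in the definition of a labelling)
with covered variables `S` is labelled by `C_S`, with any leaf-variable elements replaced
by their parents in `V_{v→Z_v}`. -/
def coverLabel {ι : Type} [DecidableEq ι] (V W : Vtree ι) : Vtree ι → Set (Vtree ι) :=
  fun w => if w = W then ∅ else ⋃ t ∈ maxCover V (w.varsFinset : Set ι), replLeaf V t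


/-!
In a vtree with distinct leaves two subtrees are either nested or have disjoint variables, so
the ⊆-maximal subtrees inside a set `S` partition `S`, and a walk in `V_{v→Z_v}` that avoids a
vertex `t` never enters or leaves the subtree below `t`. Hence the latent vertex of a maximal
subtree (the parent, for a leaf) separates its variables from every vertex not strictly below
it, which gives validity of the labelling. For the size bound, the parent of a non-root maximal
subtree inside `[a, b]` is not inside `[a, b]`, so by contiguity it covers `X_{a-1}` or
`X_{b+1}`; distinct maximal subtrees have distinct parents and a variable has at most `d` inner
ancestors, so `|C_{a:b}| ≤ 2d + 1`.
-/

theorem Set.ncard_biUnion_le_mul {ι α : Type*} {s : Set ι} (hs : s.Finite) {f : ι → Set α}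
    {k : ℕ} (hf : ∀ i ∈ s, (f i).ncard ≤ k) : (⋃ i ∈ s, f i).ncard ≤ s.ncard * k := by
  classical
  calc (⋃ i ∈ s, f i).ncard = (⋃ i ∈ hs.toFinset, f i).ncard := by simp
    _ ≤ ∑ i ∈ hs.toFinset, (f i).ncard := hs.toFinset.set_ncard_biUnion_le f
    _ ≤ hs.toFinset.card • k :=
        Finset.sum_le_card_nsmul _ _ _ fun i hi => hf i (by simpa using hi)
    _ = s.ncard * k := by rw [smul_eq_mul, Set.ncard_eq_toFinset_card s hs]

theorem Set.ncard_biUnion_le_of_subsingleton {ι α : Type*} {s : Set ι} (hs : s.Finite)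
    {f : ι → Set α} (hf : ∀ i ∈ s, (f i).Subsingleton) :
    (⋃ i ∈ s, f i).ncard ≤ s.ncard := by
  simpa using Set.ncard_biUnion_le_mul hs fun i hi =>
    (Set.ncard_le_one (hf i hi).finite).mpr fun _ ha _ hb => hf i hi ha hb

theorem SimpleGraph.BlocksSets.mono_right {α : Type} {G : SimpleGraph α} {C A B B' : Set α}
    (h : G.BlocksSets C A B) (hB : B' ⊆ B) : G.BlocksSets C A B' :=
  fun _ _ ha hb => h ha (hB hb)

namespace Vtree

variable {ι : Type}

theorem IsSubtreeOf.trans {s t u : Vtree ι} (h₁ : s.IsSubtreeOf t) (h₂ : t.IsSubtreeOf u) :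
    s.IsSubtreeOf u := by
  induction h₂ with
  | refl => exact h₁
  | left _ ih => exact .left ih
  | right _ ih => exact .right ih

theorem IsChildOf.isSubtreeOf {c p : Vtree ι} (h : c.IsChildOf p) : c.IsSubtreeOf p := by
  cases p with
  | leaf => exact h.elim
  | node l r => rcases h with rfl | rfl; exacts [.left (.refl _), .right (.refl _)]

theorem IsSubtreeOf.eq_or_numNodesV_lt {s t : Vtree ι} (h : s.IsSubtreeOf t) :
    s = t ∨ s.numNodesV < t.numNodesV := by
  induction h with
  | refl => exact .inl rfl
  | left _ ih | right _ ih =>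
    right
    rcases ih with rfl | ih <;> simp only [numNodesV] <;> omega

theorem IsSubtreeOf.numNodesV_le {s t : Vtree ι} (h : s.IsSubtreeOf t) :
    s.numNodesV ≤ t.numNodesV := by
  rcases h.eq_or_numNodesV_lt with rfl | h <;> omega

theorem IsChildOf.ne_of_isSubtreeOf {c p t : Vtree ι} (hc : c.IsChildOf p)
    (hp : p.IsSubtreeOf t) : c ≠ t := by
  rintro rfl
  exact absurd hp.numNodesV_le (not_le.mpr (numNodesV_lt_of_isChildOf hc))

theorem IsSubtreeOf.eq_of_numNodesV_le {s t : Vtree ι} (h : s.IsSubtreeOf t)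
    (hst : t.numNodesV ≤ s.numNodesV) : s = t :=
  h.eq_or_numNodesV_lt.resolve_right (by omega)

theorem IsSubtreeOf.antisymm {s t : Vtree ι} (h₁ : s.IsSubtreeOf t) (h₂ : t.IsSubtreeOf s) :
    s = t :=
  h₁.eq_of_numNodesV_le h₂.numNodesV_le

theorem IsSubtreeOf.eq_or_exists_isChildOf {s t : Vtree ι} (h : s.IsSubtreeOf t) :
    s = t ∨ ∃ p, p.IsSubtreeOf t ∧ s.IsChildOf p := by
  induction h with
  | refl => exact .inl rfl
  | left _ ih =>
    rcases ih with rfl | ⟨p, hp, hc⟩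
    exacts [.inr ⟨_, .refl _, .inl rfl⟩, .inr ⟨p, .left hp, hc⟩]
  | right _ ih =>
    rcases ih with rfl | ⟨p, hp, hc⟩
    exacts [.inr ⟨_, .refl _, .inr rfl⟩, .inr ⟨p, .right hp, hc⟩]

theorem IsSubtreeOf.nodup_leavesList {s t : Vtree ι} (h : s.IsSubtreeOf t)
    (ht : t.leavesList.Nodup) : s.leavesList.Nodup := by
  induction h with
  | refl => exact ht
  | left _ ih => exact ih (List.nodup_append.mp ht).1
  | right _ ih => exact ih (List.nodup_append.mp ht).2.1

theorem IsSubtreeOf.mem_subtreesList {s t : Vtree ι} (h : s.IsSubtreeOf t) :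
    s ∈ t.subtreesList := by
  induction h with
  | refl => cases s <;> simp [subtreesList]
  | left _ ih | right _ ih => simp [subtreesList, ih]

theorem finite_setOf_isSubtreeOf (V : Vtree ι) : {t : Vtree ι | t.IsSubtreeOf V}.Finite :=
  V.subtreesList.finite_toSet.subset fun _ ht => IsSubtreeOf.mem_subtreesList ht

variable [DecidableEq ι]

theorem mem_varsFinset_iff {T : Vtree ι} {x : ι} : x ∈ T.varsFinset ↔ x ∈ T.leavesList := by
  induction T with
  | leaf => simp [varsFinset, leavesList]
  | node l r ihl ihr => simp [varsFinset, leavesList, ihl, ihr]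

theorem ValidOver.coe_varsFinset {T : Vtree ι} {X : Set ι} (h : T.ValidOver X) :
    (T.varsFinset : Set ι) = X := by
  ext x
  exact mem_varsFinset_iff.trans (h.2 x)

theorem varsFinset_nonempty (T : Vtree ι) : T.varsFinset.Nonempty := by
  induction T with
  | leaf => simp [varsFinset]
  | node l r ihl _ => exact ihl.mono Finset.subset_union_left

theorem IsSubtreeOf.varsFinset_subset {s t : Vtree ι} (h : s.IsSubtreeOf t) :
    s.varsFinset ⊆ t.varsFinset := by
  induction h with
  | refl => exact subset_rfl
  | left _ ih => exact ih.trans Finset.subset_union_left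
  | right _ ih => exact ih.trans Finset.subset_union_right

theorem leaf_isSubtreeOf_iff {t : Vtree ι} {x : ι} :
    (leaf x).IsSubtreeOf t ↔ x ∈ t.varsFinset := by
  refine ⟨fun h => h.varsFinset_subset (by simp [varsFinset]), fun h => ?_⟩
  induction t with
  | leaf y =>
    obtain rfl : x = y := by simpa [varsFinset] using h
    exact .refl _
  | node l r ihl ihr =>
    rcases Finset.mem_union.mp h with h | h
    exacts [.left (ihl h), .right (ihr h)]

theorem disjoint_varsFinset_of_nodup {l r : Vtree ι} (h : (node l r).leavesList.Nodup) :
    Disjoint l.varsFinset r.varsFinset :=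
  Finset.disjoint_left.mpr fun _ hl hr =>
    List.disjoint_of_nodup_append h (mem_varsFinset_iff.mp hl) (mem_varsFinset_iff.mp hr)

theorem eq_leaf_of_varsFinset_subset {t : Vtree ι} {x : ι} (ht : t.leavesList.Nodup)
    (hx : (t.varsFinset : Set ι) ⊆ {x}) : t = leaf x := by
  cases t with
  | leaf y => rw [show y = x by simpa [varsFinset] using hx]
  | node l r =>
    have hsub : l.varsFinset ∪ r.varsFinset ⊆ {x} := by
      rwa [← Finset.coe_subset, Finset.coe_singleton]
    obtain ⟨y, hy⟩ := l.varsFinset_nonempty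
    obtain ⟨z, hz⟩ := r.varsFinset_nonempty
    obtain rfl := Finset.mem_singleton.mp (hsub (Finset.mem_union_left _ hy))
    obtain rfl := Finset.mem_singleton.mp (hsub (Finset.mem_union_right _ hz))
    exact (Finset.disjoint_left.mp (disjoint_varsFinset_of_nodup ht) hy hz).elim

theorem isSubtreeOf_or_isSubtreeOf_or_disjoint {V : Vtree ι} (hnd : V.leavesList.Nodup)
    {s t : Vtree ι} (hs : s.IsSubtreeOf V) (ht : t.IsSubtreeOf V) :
    s.IsSubtreeOf t ∨ t.IsSubtreeOf s ∨ Disjoint s.varsFinset t.varsFinset := by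
  induction V with
  | leaf => cases hs; cases ht; exact .inl (.refl _)
  | node l r ihl ihr =>
    have hdisj := disjoint_varsFinset_of_nodup hnd
    cases hs with
    | refl => exact .inr (.inl ht)
    | left hs =>
      cases ht with
      | refl => exact .inl (.left hs)
      | left ht => exact ihl (List.nodup_append.mp hnd).1 hs ht
      | right ht => exact .inr (.inr (hdisj.mono hs.varsFinset_subset ht.varsFinset_subset))
    | right hs =>
      cases ht with
      | refl => exact .inl (.right hs)
      | left ht => exact .inr (.inr (hdisj.symm.mono hs.varsFinset_subset ht.varsFinset_subset))
      | right ht => exact ihr (List.nodup_append.mp hnd).2.1 hs ht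

theorem IsChildOf.eq_of_isSubtreeOf {c p q : Vtree ι} (hq : q.leavesList.Nodup)
    (hcq : c.IsChildOf q) (hcp : c.IsChildOf p) (hpq : p.IsSubtreeOf q) : p = q := by
  cases q with
  | leaf => exact hcq.elim
  | node l r =>
    have hdisj := disjoint_varsFinset_of_nodup hq
    have hcp_lt := numNodesV_lt_of_isChildOf hcp
    obtain ⟨x, hx⟩ := c.varsFinset_nonempty
    have hxp := hcp.isSubtreeOf.varsFinset_subset hx
    cases hpq with
    | refl => rfl
    | left h =>
      rcases hcq with rfl | rfl
      · exact absurd h.numNodesV_le (by omega)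
      · exact (Finset.disjoint_left.mp hdisj (h.varsFinset_subset hxp) hx).elim
    | right h =>
      rcases hcq with rfl | rfl
      · exact (Finset.disjoint_left.mp hdisj hx (h.varsFinset_subset hxp)).elim
      · exact absurd h.numNodesV_le (by omega)

theorem IsChildOf.unique {V c p q : Vtree ι} (hnd : V.leavesList.Nodup)
    (hp : p.IsSubtreeOf V) (hq : q.IsSubtreeOf V) (hcp : c.IsChildOf p)
    (hcq : c.IsChildOf q) : p = q := by
  rcases isSubtreeOf_or_isSubtreeOf_or_disjoint hnd hp hq with h | h | h
  · exact hcq.eq_of_isSubtreeOf (hq.nodup_leavesList hnd) hcp h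
  · exact (hcp.eq_of_isSubtreeOf (hp.nodup_leavesList hnd) hcq h).symm
  · obtain ⟨x, hx⟩ := c.varsFinset_nonempty
    exact (Finset.disjoint_left.mp h (hcp.isSubtreeOf.varsFinset_subset hx)
      (hcq.isSubtreeOf.varsFinset_subset hx)).elim

end Vtree

open Vtree

section MaxCover

variable {ι : Type} [DecidableEq ι] {V t : Vtree ι} {S : Set ι}

theorem maxCover_finite (V : Vtree ι) (S : Set ι) : (maxCover V S).Finite :=
  V.finite_setOf_isSubtreeOf.subset fun _ ht => ht.1

theorem exists_mem_maxCover_isSubtreeOf (htV : t.IsSubtreeOf V)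
    (htS : (t.varsFinset : Set ι) ⊆ S) : ∃ u ∈ maxCover V S, t.IsSubtreeOf u := by
  obtain ⟨u, ⟨huV, huS, htu⟩, hmax⟩ := Set.exists_max_image
    {u | u.IsSubtreeOf V ∧ (u.varsFinset : Set ι) ⊆ S ∧ t.IsSubtreeOf u} numNodesV
    (V.finite_setOf_isSubtreeOf.subset fun _ hu => hu.1) ⟨t, htV, htS, .refl t⟩
  exact ⟨u, ⟨huV, huS, fun w hwV hwS huw =>
    (huw.eq_of_numNodesV_le (hmax w ⟨hwV, hwS, htu.trans huw⟩)).symm⟩, htu⟩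

theorem exists_mem_maxCover_of_subset {T : Set ι} (hST : S ⊆ T) (ht : t ∈ maxCover V S) :
    ∃ u ∈ maxCover V T, t.IsSubtreeOf u :=
  exists_mem_maxCover_isSubtreeOf ht.1 (ht.2.1.trans hST)

theorem eq_of_mem_maxCover (hnd : V.leavesList.Nodup) {u : Vtree ι} (ht : t ∈ maxCover V S)
    (hu : u ∈ maxCover V S) {x : ι} (hxt : x ∈ t.varsFinset) (hxu : x ∈ u.varsFinset) :
    t = u := by
  rcases isSubtreeOf_or_isSubtreeOf_or_disjoint hnd ht.1 hu.1 with h | h | h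
  · exact (ht.2.2 u hu.1 hu.2.1 h).symm
  · exact hu.2.2 t ht.1 ht.2.1 h
  · exact (Finset.disjoint_left.mp h hxt hxu).elim

theorem exists_mem_maxCover_of_mem {x : ι} (hxV : x ∈ V.varsFinset) (hxS : x ∈ S) :
    ∃ t ∈ maxCover V S, x ∈ t.varsFinset := by
  obtain ⟨t, ht, hxt⟩ := exists_mem_maxCover_isSubtreeOf (leaf_isSubtreeOf_iff.mpr hxV)
    (by simpa [varsFinset] using hxS)
  exact ⟨t, ht, leaf_isSubtreeOf_iff.mp hxt⟩

theorem existsUnique_mem_maxCover (hnd : V.leavesList.Nodup) {x : ι} (hxV : x ∈ V.varsFinset)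
    (hxS : x ∈ S) : ∃! t, t ∈ maxCover V S ∧ x ∈ t.varsFinset := by
  obtain ⟨t, ht, hxt⟩ := exists_mem_maxCover_of_mem hxV hxS
  exact ⟨t, ⟨ht, hxt⟩, fun u ⟨hu, hxu⟩ => eq_of_mem_maxCover hnd hu ht hxu hxt⟩

theorem maxCover_singleton (hnd : V.leavesList.Nodup) {x : ι} (hxV : x ∈ V.varsFinset) :
    maxCover V {x} = {leaf x} := by
  have hleaf : ∀ {u}, u.IsSubtreeOf V → (u.varsFinset : Set ι) ⊆ {x} → u = leaf x :=
    fun hu hux => eq_leaf_of_varsFinset_subset (hu.nodup_leavesList hnd) hux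
  ext t
  refine ⟨fun ht => hleaf ht.1 ht.2.1, ?_⟩
  rintro rfl
  exact ⟨leaf_isSubtreeOf_iff.mpr hxV, by simp [varsFinset], fun u hu hux _ => hleaf hu hux⟩

theorem not_varsFinset_subset_of_isChildOf {p : Vtree ι} (ht : t ∈ maxCover V S)
    (hp : p.IsSubtreeOf V) (htp : t.IsChildOf p) : ¬ (p.varsFinset : Set ι) ⊆ S := fun hpS =>
  (numNodesV_lt_of_isChildOf htp).ne (congrArg numNodesV (ht.2.2 p hp hpS htp.isSubtreeOf)).symm

theorem maxCover_isChildOf_subsingleton {p : Vtree ι} (hp : p.IsSubtreeOf V) :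
    {t ∈ maxCover V S | t.IsChildOf p}.Subsingleton := by
  rintro t₁ ⟨ht₁, hp₁⟩ t₂ ⟨ht₂, hp₂⟩
  by_contra hne
  cases p with
  | leaf => exact hp₁.elim
  | node l r =>
    refine not_varsFinset_subset_of_isChildOf ht₁ hp hp₁ ?_
    have hlr : (l.varsFinset : Set ι) ⊆ S ∧ (r.varsFinset : Set ι) ⊆ S := by
      rcases hp₁ with rfl | rfl <;> rcases hp₂ with rfl | rfl
      exacts [(hne rfl).elim, ⟨ht₁.2.1, ht₂.2.1⟩, ⟨ht₂.2.1, ht₁.2.1⟩,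
        (hne rfl).elim]
    simpa [varsFinset] using Set.union_subset hlr.1 hlr.2

end MaxCover

namespace Vtree

variable {ι : Type} [DecidableEq ι]

def innerAncestors (V : Vtree ι) (x : ι) : Set (Vtree ι) :=
  {p | p.IsSubtreeOf V ∧ p.isNodeB = true ∧ x ∈ p.varsFinset}

theorem ncard_innerAncestors_le {V : Vtree ι} (hnd : V.leavesList.Nodup) (x : ι) :
    (V.innerAncestors x).ncard ≤ V.depthV := by
  induction V with
  | leaf y =>
    have : (leaf y).innerAncestors x = ∅ :=
      Set.eq_empty_of_forall_notMem fun p ⟨hp, hpn, _⟩ => by cases hp; simp [isNodeB] at hpn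
    simp [this]
  | node l r ihl ihr =>
    obtain ⟨c, hc, hsub⟩ : ∃ c : Vtree ι, c.IsChildOf (node l r) ∧
        (node l r).innerAncestors x ⊆ insert (node l r) (c.innerAncestors x) := by
      by_cases hxl : x ∈ l.varsFinset
      · refine ⟨l, .inl rfl, ?_⟩
        rintro p ⟨hp | hp | hp, hpn, hxp⟩
        · exact Set.mem_insert _ _
        · exact Set.mem_insert_of_mem _ ⟨hp, hpn, hxp⟩
        · exact (Finset.disjoint_left.mp (disjoint_varsFinset_of_nodup hnd) hxl
            (hp.varsFinset_subset hxp)).elim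
      · refine ⟨r, .inr rfl, ?_⟩
        rintro p ⟨hp | hp | hp, hpn, hxp⟩
        · exact Set.mem_insert _ _
        · exact (hxl (hp.varsFinset_subset hxp)).elim
        · exact Set.mem_insert_of_mem _ ⟨hp, hpn, hxp⟩
    have ihc : (c.innerAncestors x).ncard ≤ c.depthV := by
      rcases hc with rfl | rfl
      exacts [ihl (List.nodup_append.mp hnd).1, ihr (List.nodup_append.mp hnd).2.1]
    have hdepth : c.depthV + 1 ≤ (node l r).depthV := by
      rcases hc with rfl | rfl <;> simp only [depthV] <;> omega
    calc _ ≤ (insert (node l r) (c.innerAncestors x)).ncard :=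
          Set.ncard_le_ncard hsub ((c.finite_setOf_isSubtreeOf.subset fun _ hp => hp.1).insert _)
      _ ≤ (c.innerAncestors x).ncard + 1 := Set.ncard_insert_le _ _
      _ ≤ _ := by omega

end Vtree

section Interval

variable {n : ℕ} {V : Vtree (Fin n)}

theorem finInterval_subset_finInterval {a b c e : ℕ} (hac : a ≤ c) (heb : e ≤ b) :
    finInterval n c e ⊆ finInterval n a b :=
  fun _ hi => ⟨hac.trans hi.1, hi.2.trans heb⟩

theorem exists_boundary_parent_of_mem_maxCover (hVc : V.ContiguousV) {a b : ℕ}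
    {t : Vtree (Fin n)} (ht : t ∈ maxCover V (finInterval n a b)) (htV : t ≠ V) :
    ∃ i : Fin n, ((i : ℕ) + 1 = a ∨ (i : ℕ) = b + 1) ∧
      ∃ p ∈ V.innerAncestors i, t.IsChildOf p := by
  obtain rfl | ⟨p, hpV, htp⟩ := ht.1.eq_or_exists_isChildOf
  · exact absurd rfl htV
  have hpn : p.isNodeB = true := by cases p; exacts [htp.elim, rfl]
  obtain ⟨m, hmp, hmS⟩ := Set.not_subset.mp (not_varsFinset_subset_of_isChildOf ht hpV htp)
  obtain ⟨x, hxt⟩ := t.varsFinset_nonempty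
  have hxS : a ≤ (x : ℕ) ∧ (x : ℕ) ≤ b := ht.2.1 hxt
  obtain ⟨a', b', hp⟩ := hVc p hpV
  have hm := (hp m).mp hmp
  have hx := (hp x).mp (htp.isSubtreeOf.varsFinset_subset hxt)
  have hmn := m.isLt
  simp only [finInterval, Set.mem_ofPred_eq, not_and_or, not_le] at hmS
  rcases hmS with hma | hmb
  · exact ⟨⟨a - 1, by omega⟩, .inl (by simp only; omega), p,
      ⟨hpV, hpn, (hp _).mpr (by simp only; omega)⟩, htp⟩
  · exact ⟨⟨b + 1, by omega⟩, .inr rfl, p,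
      ⟨hpV, hpn, (hp _).mpr (by simp only; omega)⟩, htp⟩

theorem ncard_maxCover_finInterval_le (hnd : V.leavesList.Nodup) (hVc : V.ContiguousV)
    (a b : ℕ) : (maxCover V (finInterval n a b)).ncard ≤ 2 * V.depthV + 1 := by
  set C := maxCover V (finInterval n a b)
  set boundary : Set (Fin n) := {i | (i : ℕ) + 1 = a ∨ (i : ℕ) = b + 1}
  set P := ⋃ i ∈ boundary, V.innerAncestors i
  have hboundary : boundary.ncard ≤ 2 :=
    calc boundary.ncard ≤ ({a - 1, b + 1} : Set ℕ).ncard :=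
          Set.ncard_le_ncard_of_injOn Fin.val
            (fun i hi => by rcases hi with h | h <;> simp <;> omega) Fin.val_injective.injOn
      _ ≤ ({b + 1} : Set ℕ).ncard + 1 := Set.ncard_insert_le _ _
      _ = 2 := by rw [Set.ncard_singleton]
  have hP : P.ncard ≤ 2 * V.depthV :=
    (Set.ncard_biUnion_le_mul boundary.toFinite fun i _ => ncard_innerAncestors_le hnd i).trans
      (Nat.mul_le_mul_right _ hboundary)
  have hPV : P ⊆ {p | p.IsSubtreeOf V} := Set.iUnion₂_subset fun _ _ _ hp => hp.1
  have hCP : C \ {V} ⊆ ⋃ p ∈ P, {t ∈ C | t.IsChildOf p} := by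
    rintro t ⟨ht, htV⟩
    obtain ⟨i, hi, p, hp, htp⟩ := exists_boundary_parent_of_mem_maxCover hVc ht htV
    exact Set.mem_biUnion (Set.mem_biUnion hi hp) ⟨ht, htp⟩
  have hCV : (C \ {V}).ncard ≤ P.ncard :=
    (Set.ncard_le_ncard hCP
      ((maxCover_finite V _).subset (Set.iUnion₂_subset fun _ _ _ ht => ht.1))).trans
      (Set.ncard_biUnion_le_of_subsingleton (V.finite_setOf_isSubtreeOf.subset hPV)
        fun _ hp => maxCover_isChildOf_subsingleton (hPV hp))
  have := Set.pred_ncard_le_ncard_sdiff_singleton C V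
  omega

end Interval

section Separation

variable {ι : Type} {V : Vtree ι}

theorem isChildOf_of_adj_leaf {x : ι} {p : Vtree ι} (h : (vtreeGraph V).Adj (leaf x) p) :
    (leaf x).IsChildOf p ∧ p.IsSubtreeOf V :=
  ⟨h.1.resolve_right id, h.2.2⟩

variable [DecidableEq ι]

theorem IsChildOf.isSubtreeOf_iff (hnd : V.leavesList.Nodup) {a b t : Vtree ι}
    (hab : a.IsChildOf b) (hb : b.IsSubtreeOf V) (ht : t.IsSubtreeOf V) (hat : a ≠ t) :
    a.IsSubtreeOf t ↔ b.IsSubtreeOf t := by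
  refine ⟨fun h => ?_, hab.isSubtreeOf.trans⟩
  obtain rfl | ⟨p, hp, hap⟩ := h.eq_or_exists_isChildOf
  · exact absurd rfl hat
  · rwa [hab.unique hnd hb (hp.trans ht) hap]

theorem isSubtreeOf_iff_of_notMem_support (hnd : V.leavesList.Nodup) {t u v : Vtree ι}
    (ht : t.IsSubtreeOf V) (p : (vtreeGraph V).Walk u v) (htp : t ∉ p.support) :
    u.IsSubtreeOf t ↔ v.IsSubtreeOf t := by
  induction p with
  | nil => rfl
  | cons h q ih =>
    rw [SimpleGraph.Walk.support_cons, List.mem_cons, not_or] at htp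
    obtain ⟨hrel, ha, hb⟩ := h
    refine Iff.trans ?_ (ih htp.2)
    rcases hrel with hab | hba
    · exact IsChildOf.isSubtreeOf_iff hnd hab hb ht (Ne.symm htp.1)
    · exact (IsChildOf.isSubtreeOf_iff hnd hba ha ht
        fun e => htp.2 (e ▸ q.start_mem_support)).symm

theorem exists_mem_replLeaf_support (hnd : V.leavesList.Nodup) {t v : Vtree ι} {x : ι}
    (ht : t.IsSubtreeOf V) (hxt : x ∈ t.varsFinset) (hvt : v.IsSubtreeOf t → v = t)
    (hvx : v ≠ leaf x) (p : (vtreeGraph V).Walk (leaf x) v) :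
    ∃ c ∈ replLeaf V t, c ∈ p.support := by
  cases t with
  | leaf y =>
    obtain rfl : x = y := by simpa [varsFinset] using hxt
    cases p with
    | nil => exact absurd rfl hvx
    | cons h q => exact ⟨_, h, List.mem_cons_of_mem _ q.start_mem_support⟩
  | node l r =>
    by_contra hno
    have htp : node l r ∉ p.support := fun h => hno ⟨_, rfl, h⟩
    have hv := hvt ((isSubtreeOf_iff_of_notMem_support hnd ht p htp).mp
      (leaf_isSubtreeOf_iff.mpr hxt))
    exact htp (hv ▸ p.end_mem_support)

theorem isSubtreeOf_of_mem_replLeaf {s v : Vtree ι} (h : v ∈ replLeaf V s) :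
    s.IsSubtreeOf v := by
  cases s with
  | leaf => exact (isChildOf_of_adj_leaf h).1.isSubtreeOf
  | node => exact h ▸ .refl _

theorem isNodeB_of_mem_replLeaf {s v : Vtree ι} (h : v ∈ replLeaf V s) : v.isNodeB = true := by
  cases s with
  | leaf =>
    have := (isChildOf_of_adj_leaf h).1
    cases v; exacts [this.elim, rfl]
  | node => exact h ▸ rfl

theorem replLeaf_subset {s : Vtree ι} (hs : s.IsSubtreeOf V) :
    replLeaf V s ⊆ {v | v.IsSubtreeOf V} := by
  cases s with
  | leaf => exact fun _ h => (isChildOf_of_adj_leaf h).2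
  | node => exact fun _ h => h ▸ hs

theorem replLeaf_subsingleton (hnd : V.leavesList.Nodup) (s : Vtree ι) :
    (replLeaf V s).Subsingleton := by
  cases s with
  | leaf =>
    intro p hp q hq
    obtain ⟨hxp, hp⟩ := isChildOf_of_adj_leaf hp
    obtain ⟨hxq, hq⟩ := isChildOf_of_adj_leaf hq
    exact hxp.unique hnd hp hq hxq
  | node => exact Set.subsingleton_singleton

end Separation

section CoverSet

variable {ι : Type} [DecidableEq ι] {V : Vtree ι} {S : Set ι}

/-- The set `C_S` of maximal subtrees inside `S`, each leaf replaced by its parent in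
`V_{v→Z_v}`. -/
def coverSet (V : Vtree ι) (S : Set ι) : Set (Vtree ι) :=
  ⋃ t ∈ maxCover V S, replLeaf V t

theorem coverSet_subset (V : Vtree ι) (S : Set ι) : coverSet V S ⊆ {v | v.IsSubtreeOf V} :=
  Set.iUnion₂_subset fun _ ht => replLeaf_subset ht.1

theorem isNodeB_of_mem_coverSet {v : Vtree ι} (hv : v ∈ coverSet V S) : v.isNodeB = true := by
  obtain ⟨t, -, hvt⟩ := Set.mem_iUnion₂.mp hv
  exact isNodeB_of_mem_replLeaf hvt

theorem ncard_coverSet_le (hnd : V.leavesList.Nodup) :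
    (coverSet V S).ncard ≤ (maxCover V S).ncard :=
  Set.ncard_biUnion_le_of_subsingleton (maxCover_finite V S) fun t _ => replLeaf_subsingleton hnd t

theorem coverSet_singleton (hnd : V.leavesList.Nodup) {x : ι} (hxV : x ∈ V.varsFinset) :
    coverSet V {x} = {p | (vtreeGraph V).Adj (leaf x) p} := by
  rw [coverSet, maxCover_singleton hnd hxV, Set.biUnion_singleton]
  rfl

theorem blocksSets_coverSet (hnd : V.leavesList.Nodup) (hS : S ⊆ V.varsFinset)
    {B : Set (Vtree ι)} (hB : ∀ v ∈ B, ∀ t ∈ maxCover V S, v.IsSubtreeOf t → v = t)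
    (hSB : Disjoint (leaf '' S) B) : (vtreeGraph V).BlocksSets (coverSet V S) (leaf '' S) B := by
  rintro _ v ⟨x, hxS, rfl⟩ hv p
  obtain ⟨t, ht, hxt⟩ := exists_mem_maxCover_of_mem (hS hxS) hxS
  obtain ⟨c, hc, hcp⟩ := exists_mem_replLeaf_support hnd ht.1 hxt (hB v hv t ht)
    (fun e => Set.disjoint_left.mp hSB ⟨x, hxS, e.symm⟩ hv) p
  exact ⟨c, Set.mem_biUnion ht hc, hcp⟩

theorem blocksSets_coverSet_compl (hnd : V.leavesList.Nodup) (hS : S ⊆ V.varsFinset)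
    (X : Set ι) : (vtreeGraph V).BlocksSets (coverSet V S) (leaf '' S) (leaf '' (X \ S)) := by
  refine blocksSets_coverSet hnd hS ?_ ?_
  · rintro _ ⟨y, hy, rfl⟩ t ht hyt
    exact (hy.2 (ht.2.1 (leaf_isSubtreeOf_iff.mp hyt))).elim
  · exact Set.disjoint_image_of_injective (fun _ _ => leaf.inj) Set.disjoint_sdiff_right

theorem blocksSets_coverSet_union (hnd : V.leavesList.Nodup) (hS : S ⊆ V.varsFinset)
    {T U : Set ι} (hST : Disjoint S T) (hSU : S ⊆ U) :
    (vtreeGraph V).BlocksSets (coverSet V S) (leaf '' S) (coverSet V T ∪ coverSet V U) := by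
  refine blocksSets_coverSet hnd hS ?_ ?_
  · rintro v hv t ht hvt
    simp only [coverSet, Set.mem_union, Set.mem_iUnion₂] at hv
    rcases hv with ⟨s, hs, hsv⟩ | ⟨s, hs, hsv⟩
    · obtain ⟨x, hx⟩ := s.varsFinset_nonempty
      have hxt := ((isSubtreeOf_of_mem_replLeaf hsv).trans hvt).varsFinset_subset hx
      exact (Set.disjoint_left.mp hST (ht.2.1 hxt) (hs.2.1 hx)).elim
    · have hst := (isSubtreeOf_of_mem_replLeaf hsv).trans hvt
      obtain rfl := hs.2.2 t ht.1 (ht.2.1.trans hSU) hst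
      exact hvt.antisymm (isSubtreeOf_of_mem_replLeaf hsv)
  · refine Set.disjoint_right.mpr fun v hv ⟨x, _, hxv⟩ => ?_
    have := hv.elim isNodeB_of_mem_coverSet isNodeB_of_mem_coverSet
    simp [← hxv, isNodeB] at this

end CoverSet

section Labelling

variable {ι : Type} [DecidableEq ι] {V W : Vtree ι}

theorem coverLabel_of_ne {w : Vtree ι} (h : w ≠ W) :
    coverLabel V W w = coverSet V w.varsFinset :=
  if_neg h

theorem coverLabel_subset (w : Vtree ι) : coverLabel V W w ⊆ coverSet V w.varsFinset := by
  unfold coverLabel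
  split_ifs
  exacts [Set.empty_subset _, subset_rfl]

theorem isValidLabelling_coverLabel {X : Set ι} (hV : V.ValidOver X) (hW : W.ValidOver X)
    (hWnode : W.isNodeB = true) : IsValidLabelling (vtreeGraph V) leaf X W (coverLabel V W) := by
  have hnd := hV.1
  have hsub : ∀ {w : Vtree ι}, w.IsSubtreeOf W → (w.varsFinset : Set ι) ⊆ V.varsFinset :=
    fun hw => (Finset.coe_subset.mpr hw.varsFinset_subset).trans
      (by rw [hW.coe_varsFinset, hV.coe_varsFinset])
  have hdisj : ∀ {l r : Vtree ι}, (node l r).IsSubtreeOf W →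
      Disjoint (l.varsFinset : Set ι) r.varsFinset :=
    fun hlr => Finset.disjoint_coe.mpr (disjoint_varsFinset_of_nodup (hlr.nodup_leavesList hW.1))
  refine ⟨if_pos rfl, fun x hx => ?_, fun l r hlr => ?_, fun l r hlr => ?_, fun l r hlr => ?_⟩
  · have hxW : leaf x ≠ W := by rintro rfl; simp [isNodeB] at hWnode
    rw [coverLabel_of_ne hxW, varsFinset, Finset.coe_singleton,
      coverSet_singleton hnd (hsub hx (by simp [varsFinset]))]
  · by_cases hlrW : node l r = W
    · rw [hlrW, hW.coe_varsFinset, Set.sdiff_self, Set.image_empty]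
      exact fun _ _ _ hb => hb.elim
    · rw [coverLabel_of_ne hlrW]
      exact blocksSets_coverSet_compl hnd (hsub hlr) X
  · have hl : l.IsChildOf (node l r) := .inl rfl
    rw [coverLabel_of_ne (IsChildOf.ne_of_isSubtreeOf hl hlr)]
    exact (blocksSets_coverSet_union hnd (hsub ((IsChildOf.isSubtreeOf hl).trans hlr)) (hdisj hlr)
      (Finset.coe_subset.mpr Finset.subset_union_left)).mono_right
      (Set.union_subset_union (coverLabel_subset r) (coverLabel_subset _))
  · have hr : r.IsChildOf (node l r) := .inr rfl
    rw [coverLabel_of_ne (IsChildOf.ne_of_isSubtreeOf hr hlr)]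
    exact (blocksSets_coverSet_union hnd (hsub ((IsChildOf.isSubtreeOf hr).trans hlr))
      (hdisj hlr).symm
      (Finset.coe_subset.mpr Finset.subset_union_right)).mono_right
      (Set.union_subset_union (coverLabel_subset l) (coverLabel_subset _))

end Labelling

theorem isNodeB_of_validOver_univ {n : ℕ} (hn : 2 ≤ n) {T : Vtree (Fin n)}
    (hT : T.ValidOver Set.univ) : T.isNodeB = true := by
  cases T with
  | node => rfl
  | leaf x =>
    have h₀ := (hT.2 ⟨0, by omega⟩).mpr trivial
    have h₁ := (hT.2 ⟨1, by omega⟩).mpr trivial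
    simp only [leavesList, List.mem_singleton] at h₀ h₁
    exact absurd (congrArg Fin.val (h₀.trans h₁.symm)) (by simp)

theorem ncard_coverLabel_le {n : ℕ} {V W u : Vtree (Fin n)} (hnd : V.leavesList.Nodup)
    (hVc : V.ContiguousV) (hWc : W.ContiguousV) (hu : u.IsSubtreeOf W) :
    (coverLabel V W u).ncard ≤ 2 * V.depthV + 1 := by
  obtain ⟨a, b, hab⟩ := hWc u hu
  have hu : (u.varsFinset : Set (Fin n)) = finInterval n a b := Set.ext hab
  calc (coverLabel V W u).ncard ≤ (coverSet V u.varsFinset).ncard :=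
        Set.ncard_le_ncard (coverLabel_subset u)
          (V.finite_setOf_isSubtreeOf.subset (coverSet_subset V _))
    _ ≤ (maxCover V u.varsFinset).ncard := ncard_coverSet_le hnd
    _ ≤ 2 * V.depthV + 1 := hu ▸ ncard_maxCover_finInterval_le hnd hVc a b

/-- Let `V` be a contiguous vtree of depth `d` over ordered variables
`X₁, …, Xₙ`, with associated tree `G = V_{v→Z_v}`, and for each interval `[a,b]` let
`C_{a:b}` be the set of ⊆-maximal nodes of `V` whose covered interval is contained in
`{X_a, …, X_b}`.  Then: (i) the covered intervals of the elements of `C_{a:b}` partition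
`{X_a, …, X_b}`; (ii) if `a ≤ c ≤ e ≤ b` then every element of `C_{c:e}` has an
ancestor-or-self in `C_{a:b}`; (iii) `|C_{a:b}| ≤ 4d`.  Consequently, for any contiguous
vtree `W` over `X₁, …, Xₙ`, assigning `C_w := C_{a:b}` to the node `w` with covered
interval `{X_a, …, X_b}` (replacing leaf-variable elements by their parents in `G`) yields
a valid labelling of `W` with respect to `G` of cardinality at most `12d`. -/
theorem statement9 {n : ℕ} (hn : 2 ≤ n) (V : Vtree (Fin n))
    (hV : V.ValidOver Set.univ) (hVc : V.ContiguousV) :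
    (∀ a b : ℕ,
      (∀ x : Fin n, x ∈ finInterval n a b →
        ∃! t : Vtree (Fin n), t ∈ maxCover V (finInterval n a b) ∧ x ∈ t.varsFinset) ∧
      (∀ c e : ℕ, a ≤ c → c ≤ e → e ≤ b →
        ∀ t ∈ maxCover V (finInterval n c e),
          ∃ u ∈ maxCover V (finInterval n a b), t.IsSubtreeOf u) ∧
      (maxCover V (finInterval n a b)).ncard ≤ 4 * V.depthV) ∧
    ∀ W : Vtree (Fin n), W.ValidOver Set.univ → W.ContiguousV →
      IsValidLabelling (vtreeGraph V) Vtree.leaf Set.univ W (coverLabel V W) ∧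
      ∀ l r : Vtree (Fin n), (Vtree.node l r).IsSubtreeOf W →
        (coverLabel V W l ∪ coverLabel V W r ∪
          coverLabel V W (Vtree.node l r)).ncard ≤ 12 * V.depthV := by
  have hnd := hV.1
  have hVvars : ∀ x, x ∈ V.varsFinset := fun x => by
    rw [← Finset.mem_coe, hV.coe_varsFinset]; trivial
  have hd : 1 ≤ V.depthV := by
    have hVnode := isNodeB_of_validOver_univ hn hV
    cases V
    exacts [by simp [isNodeB] at hVnode, by simp [depthV]]
  refine ⟨fun a b => ⟨fun x hx => existsUnique_mem_maxCover hnd (hVvars x) hx,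
    fun _ _ hac _ heb _ ht =>
      exists_mem_maxCover_of_subset (finInterval_subset_finInterval hac heb) ht,
    (ncard_maxCover_finInterval_le hnd hVc a b).trans (by omega)⟩,
    fun W hW hWc => ⟨isValidLabelling_coverLabel hV hW (isNodeB_of_validOver_univ hn hW),
      fun l r hlr => ?_⟩⟩
  have hl := ncard_coverLabel_le hnd hVc hWc ((IsSubtreeOf.left (.refl l)).trans hlr)
  have hr := ncard_coverLabel_le hnd hVc hWc ((IsSubtreeOf.right (.refl r)).trans hlr)
  have hlr := ncard_coverLabel_le hnd hVc hWc hlr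
  have := Set.ncard_union_le (coverLabel V W l) (coverLabel V W r)
  have := Set.ncard_union_le (coverLabel V W l ∪ coverLabel V W r) (coverLabel V W (node l r))
  omega
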